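/- With C = ln(1+√2)/π, one has (3C+4)/C < 17.26; consequently the minimum value H* of the Ising Hamiltonian on the Chimera graph G_r satisfies H* ≤ −(1/17.26)·(Σ_{(u,v)∈E}|c_{uv}| + Σ_{u∈V}|d_u|), i.e., the trivial lower bound −(Σ_{(u,v)∈E}|c_{uv}| + Σ_{u∈V}|d_u|) is within a factor less than 17.26 of the optimum. -/

import Mathlib

open Finset

abbrev ChimeraVertex (r : ℕ) := Fin r × Fin r × Fin 4 × Fin 2

def lowRow {r : ℕ} (i : Fin (r - 1)) : Fin r := ⟨i.val, by have := i.isLt; omega⟩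

def highRow {r : ℕ} (i : Fin (r - 1)) : Fin r := ⟨i.val + 1, by have := i.isLt; omega⟩

/-- `S` is a valid spin assignment, i.e. takes values in `{-1, 1}`. -/
def IsPM {r : ℕ} (S : ChimeraVertex r → ℝ) : Prop := ∀ v, S v = 1 ∨ S v = -1

/-- The Ising Hamiltonian on the Chimera graph `G_r`. -/
def IsingH {r : ℕ} (c0 : Fin (r - 1) → Fin r → Fin 4 → ℝ)
    (c1 : Fin r → Fin (r - 1) → Fin 4 → ℝ)
    (c01 : Fin r → Fin r → Fin 4 → Fin 4 → ℝ)
    (d : ChimeraVertex r → ℝ) (S : ChimeraVertex r → ℝ) : ℝ :=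
  (∑ i, ∑ j, ∑ k, c0 i j k * (S (lowRow i, j, k, 0) * S (highRow i, j, k, 0)))
    + (∑ i, ∑ j, ∑ k, c1 i j k * (S (i, lowRow j, k, 1) * S (i, highRow j, k, 1)))
    + (∑ i, ∑ j, ∑ k0, ∑ k1, c01 i j k0 k1 * (S (i, j, k0, 0) * S (i, j, k1, 1)))
    + (∑ v, d v * S v)

/-!
The upper bounds on `H*` come from averaging `H` over random spin configurations
`S u = ε u * s (σ u)`, where `s` is a uniformly random `±1` function and `σ` lets several vertices
share one coin: then `E[S u * S v] = ε u * ε v` if `σ u = σ v` and `0` otherwise, while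
`E[S u] = 0`. Merging the two endpoints of every edge of a matching `M`, oriented by `ε` against
the sign of its coupling, gives `H* ≤ -∑_{e ∈ M} |c_e|`. The edges split into eight matchings
(`E_0` and `E_1` by the parity of the lower endpoint, `E_01` by `k₁ - k₀ mod 4`), so
`8 H* ≤ -∑_E |c|`, and the spins `S u = -sign d_u` give `H* ≤ ∑_E |c| - ∑_V |d|`. Twice the first
plus the second is `17 H* ≤ -(∑_E |c| + ∑_V |d|)`.
-/

noncomputable section

def spin (b : Bool) : ℝ := if b then 1 else -1

lemma spin_not (b : Bool) : spin (!b) = -spin b := by cases b <;> simp [spin]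

lemma spin_eq_one_or_eq_neg_one (b : Bool) : spin b = 1 ∨ spin b = -1 := by
  cases b <;> simp [spin]

lemma spin_mul_self (b : Bool) : spin b * spin b = 1 := by cases b <;> simp [spin]

section Averaging

variable {V W : Type*} [DecidableEq W]

def flipAt (w : W) (g : W → Bool) : W → Bool := Function.update g w (!g w)

lemma flipAt_involutive (w : W) : Function.Involutive (flipAt w) := by
  intro g
  simp [flipAt]

def signedSpin (σ : V → W) (ε : V → ℝ) (g : W → Bool) (u : V) : ℝ := ε u * spin (g (σ u))

/-- The correlation `E[S u * S v]` of the random configuration `signedSpin σ ε`. -/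
def spinCorr (σ : V → W) (ε : V → ℝ) (u v : V) : ℝ := if σ u = σ v then ε u * ε v else 0

variable [Fintype W]

lemma sum_eq_zero_of_flipAt {f : (W → Bool) → ℝ} (w : W) (hf : ∀ g, f (flipAt w g) = -f g) :
    ∑ g, f g = 0 := by
  have h := Equiv.sum_comp (flipAt_involutive w).toPerm f
  simp only [Function.Involutive.coe_toPerm, hf, sum_neg_distrib] at h
  linarith

lemma sum_spin_apply (w : W) : ∑ g : W → Bool, spin (g w) = 0 :=
  sum_eq_zero_of_flipAt w fun g => by simp [flipAt, spin_not]

lemma sum_spin_mul_spin (w w' : W) :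
    ∑ g : W → Bool, spin (g w) * spin (g w') =
      if w = w' then (Fintype.card (W → Bool) : ℝ) else 0 := by
  split_ifs with h
  · simp [h, spin_mul_self]
  · refine sum_eq_zero_of_flipAt w fun g => ?_
    simp [flipAt, Function.update_of_ne (Ne.symm h), spin_not]

lemma sum_signedSpin (σ : V → W) (ε : V → ℝ) (u : V) : ∑ g, signedSpin σ ε g u = 0 := by
  simp only [signedSpin, ← mul_sum, sum_spin_apply, mul_zero]

lemma sum_signedSpin_mul_signedSpin (σ : V → W) (ε : V → ℝ) (u v : V) :
    ∑ g, signedSpin σ ε g u * signedSpin σ ε g v =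
      spinCorr σ ε u v * Fintype.card (W → Bool) := by
  have h : ∀ g : W → Bool, signedSpin σ ε g u * signedSpin σ ε g v =
      ε u * ε v * (spin (g (σ u)) * spin (g (σ v))) := fun g => by
    simp only [signedSpin]; ring
  simp only [h, ← mul_sum, sum_spin_mul_spin, spinCorr]
  split_ifs <;> ring

end Averaging

lemma sum_sum_sum_ite_sub_eq {G : Type*} [AddGroup G] [Fintype G] [DecidableEq G]
    (f : G → G → ℝ) : ∑ c, ∑ a, ∑ b, (if b - a = c then f a b else 0) = ∑ a, ∑ b, f a b := by
  rw [sum_comm]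
  refine sum_congr rfl fun a _ => ?_
  rw [sum_comm]
  simp

def antiSign (x : ℝ) : ℝ := if 0 ≤ x then -1 else 1

lemma antiSign_eq_one_or_eq_neg_one (x : ℝ) : antiSign x = 1 ∨ antiSign x = -1 := by
  unfold antiSign; split_ifs <;> simp

lemma mul_antiSign (x : ℝ) : x * antiSign x = -|x| := by
  unfold antiSign
  split_ifs with h
  · rw [abs_of_nonneg h]; ring
  · rw [abs_of_neg (not_le.mp h)]; ring

lemma mul_mul_le_abs {c x y : ℝ} (hx : x = 1 ∨ x = -1) (hy : y = 1 ∨ y = -1) :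
    c * (x * y) ≤ |c| := by
  have hxy : |x * y| = 1 := by
    rcases hx with rfl | rfl <;> rcases hy with rfl | rfl <;> norm_num
  calc c * (x * y) ≤ |c * (x * y)| := le_abs_self _
    _ = |c| := by rw [abs_mul, hxy, mul_one]

def parity {n : ℕ} (i : Fin n) : Fin 2 := ⟨i % 2, Nat.mod_lt _ two_pos⟩

section Chimera

variable {r : ℕ} {W : Type*} [DecidableEq W]
  (c0 : Fin (r - 1) → Fin r → Fin 4 → ℝ) (c1 : Fin r → Fin (r - 1) → Fin 4 → ℝ)
  (c01 : Fin r → Fin r → Fin 4 → Fin 4 → ℝ) (d : ChimeraVertex r → ℝ)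

/-- The mean of `IsingH c0 c1 c01 d` over the configurations `signedSpin σ ε g`; the field term
averages out. -/
def corrEnergy (σ : ChimeraVertex r → W) (ε : ChimeraVertex r → ℝ) : ℝ :=
  (∑ i, ∑ j, ∑ k, c0 i j k * spinCorr σ ε (lowRow i, j, k, 0) (highRow i, j, k, 0))
    + (∑ i, ∑ j, ∑ k, c1 i j k * spinCorr σ ε (i, lowRow j, k, 1) (i, highRow j, k, 1))
    + (∑ i, ∑ j, ∑ k0, ∑ k1, c01 i j k0 k1 * spinCorr σ ε (i, j, k0, 0) (i, j, k1, 1))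

lemma sum_isingH_signedSpin [Fintype W] (σ : ChimeraVertex r → W) (ε : ChimeraVertex r → ℝ) :
    ∑ g, IsingH c0 c1 c01 d (signedSpin σ ε g) =
      Fintype.card (W → Bool) * corrEnergy c0 c1 c01 σ ε := by
  simp only [IsingH, corrEnergy, sum_add_distrib, sum_comm (s := (univ : Finset (W → Bool))),
    ← mul_sum, sum_signedSpin, sum_signedSpin_mul_signedSpin, mul_zero, sum_const_zero]
  simp only [← mul_assoc, ← sum_mul]
  ring

lemma le_corrEnergy [Fintype W] {m : ℝ} (hm : ∀ S, IsPM S → m ≤ IsingH c0 c1 c01 d S)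
    (σ : ChimeraVertex r → W) {ε : ChimeraVertex r → ℝ} (hε : IsPM ε) :
    m ≤ corrEnergy c0 c1 c01 σ ε := by
  have hS : ∀ g, IsPM (signedSpin σ ε g) := fun g u => by
    rcases hε u with h | h <;> rcases spin_eq_one_or_eq_neg_one (g (σ u)) with h' | h' <;>
      simp [signedSpin, h, h']
  have hsum := card_nsmul_le_sum univ _ m fun g _ => hm _ (hS g)
  rw [sum_isingH_signedSpin, card_univ, nsmul_eq_mul] at hsum
  exact le_of_mul_le_mul_left hsum (by positivity)

def rowMerge (t : Fin 2) : ChimeraVertex r → ChimeraVertex r := fun (i, j, k, l) =>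
  if l = 0 ∧ parity i ≠ t then (⟨i - 1, by omega⟩, j, k, l) else (i, j, k, l)

def rowSign (t : Fin 2) : ChimeraVertex r → ℝ := fun (i, j, k, l) =>
  if h : l = 0 ∧ parity i ≠ t ∧ 0 < (i : ℕ) then antiSign (c0 ⟨i - 1, by omega⟩ j k) else 1

lemma rowSign_isPM (t : Fin 2) : IsPM (rowSign c0 t) := by
  rintro ⟨i, j, k, l⟩
  dsimp only [rowSign]
  split_ifs
  · exact antiSign_eq_one_or_eq_neg_one _
  · simp

lemma corrEnergy_rowMerge (t : Fin 2) :
    corrEnergy c0 c1 c01 (rowMerge t) (rowSign c0 t) =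
      ∑ i, ∑ j, ∑ k, if parity i = t then -|c0 i j k| else 0 := by
  have h0 : ∀ i j k,
      c0 i j k * spinCorr (rowMerge t) (rowSign c0 t) (lowRow i, j, k, 0) (highRow i, j, k, 0) =
        if parity i = t then -|c0 i j k| else 0 := by
    intro i j k
    have := i.isLt
    by_cases hi : (i : ℕ) % 2 = t
    · have hi' : ((i : ℕ) + 1) % 2 ≠ t := by omega
      simp [spinCorr, rowMerge, rowSign, parity, lowRow, highRow, Fin.ext_iff, hi, hi',
        mul_antiSign]
    · have hi' : ((i : ℕ) + 1) % 2 = t := by omega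
      simp [spinCorr, rowMerge, parity, lowRow, highRow, hi, hi', Fin.ext_iff]
  have h1 : ∀ i j k,
      spinCorr (rowMerge t) (rowSign c0 t) (i, lowRow j, k, 1) (i, highRow j, k, 1) = 0 := by
    intro i j k
    simp [spinCorr, rowMerge, lowRow, highRow, Fin.ext_iff]
  have h01 : ∀ i j k0 k1,
      spinCorr (rowMerge t) (rowSign c0 t) (i, j, k0, 0) (i, j, k1, 1) = 0 := by
    intro i j k0 k1
    simp only [spinCorr, rowMerge]
    split_ifs <;> simp_all
  simp [corrEnergy, h0, h1, h01]

def colMerge (t : Fin 2) : ChimeraVertex r → ChimeraVertex r := fun (i, j, k, l) =>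
  if l = 1 ∧ parity j ≠ t then (i, ⟨j - 1, by omega⟩, k, l) else (i, j, k, l)

def colSign (t : Fin 2) : ChimeraVertex r → ℝ := fun (i, j, k, l) =>
  if h : l = 1 ∧ parity j ≠ t ∧ 0 < (j : ℕ) then antiSign (c1 i ⟨j - 1, by omega⟩ k) else 1

lemma colSign_isPM (t : Fin 2) : IsPM (colSign c1 t) := by
  rintro ⟨i, j, k, l⟩
  dsimp only [colSign]
  split_ifs
  · exact antiSign_eq_one_or_eq_neg_one _
  · simp

lemma corrEnergy_colMerge (t : Fin 2) :
    corrEnergy c0 c1 c01 (colMerge t) (colSign c1 t) =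
      ∑ i, ∑ j, ∑ k, if parity j = t then -|c1 i j k| else 0 := by
  have h0 : ∀ i j k,
      spinCorr (colMerge t) (colSign c1 t) (lowRow i, j, k, 0) (highRow i, j, k, 0) = 0 := by
    intro i j k
    simp [spinCorr, colMerge, lowRow, highRow, Fin.ext_iff]
  have h1 : ∀ i j k,
      c1 i j k * spinCorr (colMerge t) (colSign c1 t) (i, lowRow j, k, 1) (i, highRow j, k, 1) =
        if parity j = t then -|c1 i j k| else 0 := by
    intro i j k
    have := j.isLt
    by_cases hj : (j : ℕ) % 2 = t
    · have hj' : ((j : ℕ) + 1) % 2 ≠ t := by omega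
      simp [spinCorr, colMerge, colSign, parity, lowRow, highRow, Fin.ext_iff, hj, hj',
        mul_antiSign]
    · have hj' : ((j : ℕ) + 1) % 2 = t := by omega
      simp [spinCorr, colMerge, parity, lowRow, highRow, hj, hj', Fin.ext_iff]
  have h01 : ∀ i j k0 k1,
      spinCorr (colMerge t) (colSign c1 t) (i, j, k0, 0) (i, j, k1, 1) = 0 := by
    intro i j k0 k1
    simp only [spinCorr, colMerge]
    split_ifs <;> simp_all
  simp [corrEnergy, h0, h1, h01]

def cellMerge (c : Fin 4) : ChimeraVertex r → ChimeraVertex r := fun (i, j, k, l) =>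
  if l = 1 then (i, j, k - c, 0) else (i, j, k, l)

def cellSign (c : Fin 4) : ChimeraVertex r → ℝ := fun (i, j, k, l) =>
  if l = 1 then antiSign (c01 i j (k - c) k) else 1

lemma cellSign_isPM (c : Fin 4) : IsPM (cellSign c01 c) := by
  rintro ⟨i, j, k, l⟩
  dsimp only [cellSign]
  split_ifs
  · exact antiSign_eq_one_or_eq_neg_one _
  · simp

lemma corrEnergy_cellMerge (c : Fin 4) :
    corrEnergy c0 c1 c01 (cellMerge c) (cellSign c01 c) =
      ∑ i, ∑ j, ∑ k0, ∑ k1, if k1 - k0 = c then -|c01 i j k0 k1| else 0 := by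
  have h0 : ∀ i j k,
      spinCorr (cellMerge c) (cellSign c01 c) (lowRow i, j, k, 0) (highRow i, j, k, 0) = 0 := by
    intro i j k
    simp [spinCorr, cellMerge, lowRow, highRow, Fin.ext_iff]
  have h1 : ∀ i j k,
      spinCorr (cellMerge c) (cellSign c01 c) (i, lowRow j, k, 1) (i, highRow j, k, 1) = 0 := by
    intro i j k
    simp [spinCorr, cellMerge, lowRow, highRow, Fin.ext_iff]
  have h01 : ∀ i j k0 k1,
      c01 i j k0 k1 * spinCorr (cellMerge c) (cellSign c01 c) (i, j, k0, 0) (i, j, k1, 1) =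
        if k1 - k0 = c then -|c01 i j k0 k1| else 0 := by
    intro i j k0 k1
    by_cases h : k1 - k0 = c
    · subst h
      simp [spinCorr, cellMerge, cellSign, mul_antiSign]
    · have h' : k0 ≠ k1 - c := fun e => h (by rw [e]; abel)
      simp [spinCorr, cellMerge, h, h']
  simp [corrEnergy, h0, h1, h01]

variable {m : ℝ} (hm : ∀ S, IsPM S → m ≤ IsingH c0 c1 c01 d S)
include hm

lemma two_mul_le_neg_sum_abs_c0 : 2 * m ≤ -∑ i, ∑ j, ∑ k, |c0 i j k| := by
  have h := card_nsmul_le_sum univ (fun t => corrEnergy c0 c1 c01 (rowMerge t) (rowSign c0 t)) m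
    fun t _ => le_corrEnergy c0 c1 c01 d hm _ (rowSign_isPM c0 t)
  simp only [corrEnergy_rowMerge, sum_comm (s := (univ : Finset (Fin 2)))] at h
  simpa using h

lemma two_mul_le_neg_sum_abs_c1 : 2 * m ≤ -∑ i, ∑ j, ∑ k, |c1 i j k| := by
  have h := card_nsmul_le_sum univ (fun t => corrEnergy c0 c1 c01 (colMerge t) (colSign c1 t)) m
    fun t _ => le_corrEnergy c0 c1 c01 d hm _ (colSign_isPM c1 t)
  simp only [corrEnergy_colMerge, sum_comm (s := (univ : Finset (Fin 2)))] at h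
  simpa using h

lemma four_mul_le_neg_sum_abs_c01 : 4 * m ≤ -∑ i, ∑ j, ∑ k0, ∑ k1, |c01 i j k0 k1| := by
  have h := card_nsmul_le_sum univ
    (fun c => corrEnergy c0 c1 c01 (cellMerge c) (cellSign c01 c)) m
    fun c _ => le_corrEnergy c0 c1 c01 d hm _ (cellSign_isPM c01 c)
  simp only [corrEnergy_cellMerge, sum_sum_sum_ite_sub_eq,
    sum_comm (s := (univ : Finset (Fin 4))) (t := (univ : Finset (Fin r)))] at h
  simpa using h

omit hm in
lemma isingH_le_sum_abs_add {S : ChimeraVertex r → ℝ} (hS : IsPM S) :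
    IsingH c0 c1 c01 d S ≤ (∑ i, ∑ j, ∑ k, |c0 i j k|) + (∑ i, ∑ j, ∑ k, |c1 i j k|)
      + (∑ i, ∑ j, ∑ k0, ∑ k1, |c01 i j k0 k1|) + ∑ v, d v * S v := by
  unfold IsingH
  gcongr <;> exact mul_mul_le_abs (hS _) (hS _)

lemma le_sum_abs_sub_sum_abs_d :
    m ≤ (∑ i, ∑ j, ∑ k, |c0 i j k|) + (∑ i, ∑ j, ∑ k, |c1 i j k|)
      + (∑ i, ∑ j, ∑ k0, ∑ k1, |c01 i j k0 k1|) - ∑ v, |d v| := by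
  have hS : IsPM (fun v => antiSign (d v)) := fun v => antiSign_eq_one_or_eq_neg_one _
  have h := (hm _ hS).trans (isingH_le_sum_abs_add c0 c1 c01 d hS)
  simpa only [mul_antiSign, sum_neg_distrib, ← sub_eq_add_neg] using h

end Chimera

lemma three_mul_add_four_div_lt :
    (3 * (Real.log (1 + Real.sqrt 2) / Real.pi) + 4) / (Real.log (1 + Real.sqrt 2) / Real.pi)
      < 17.26 := by
  have hsqrt : (1.414213 : ℝ) < Real.sqrt 2 := by
    nlinarith [Real.sq_sqrt (by norm_num : (0 : ℝ) ≤ 2), Real.sqrt_nonneg 2]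
  have hexp : Real.exp 0.8813 ≤ 2.414037 :=
    calc Real.exp 0.8813 ≤ _ := Real.exp_bound' (by norm_num) (by norm_num) (n := 8) (by norm_num)
      _ ≤ 2.414037 := by norm_num [sum_range_succ, Nat.factorial]
  have hlog : (0.8813 : ℝ) < Real.log (1 + Real.sqrt 2) := by
    rw [Real.lt_log_iff_exp_lt (by positivity)]
    linarith
  have hC : 4 / 14.26 < Real.log (1 + Real.sqrt 2) / Real.pi := by
    rw [div_lt_div_iff₀ (by norm_num) Real.pi_pos]
    linarith [Real.pi_lt_d6]
  rw [div_lt_iff₀ (by positivity)]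
  linarith

end

theorem stmt10_general (r : ℕ)
    (c0 : Fin (r - 1) → Fin r → Fin 4 → ℝ)
    (c1 : Fin r → Fin (r - 1) → Fin 4 → ℝ)
    (c01 : Fin r → Fin r → Fin 4 → Fin 4 → ℝ)
    (d : ChimeraVertex r → ℝ)
    (Sopt : ChimeraVertex r → ℝ)
    (hmin : ∀ S : ChimeraVertex r → ℝ, IsPM S →
      IsingH c0 c1 c01 d Sopt ≤ IsingH c0 c1 c01 d S) :
    (3 * (Real.log (1 + Real.sqrt 2) / Real.pi) + 4) /
        (Real.log (1 + Real.sqrt 2) / Real.pi) < 17.26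
    ∧ IsingH c0 c1 c01 d Sopt ≤
        -(1 / 17.26) *
          ((∑ i, ∑ j, ∑ k, |c0 i j k|) + (∑ i, ∑ j, ∑ k, |c1 i j k|)
            + (∑ i, ∑ j, ∑ k0, ∑ k1, |c01 i j k0 k1|) + (∑ v, |d v|)) := by
  refine ⟨three_mul_add_four_div_lt, ?_⟩
  have hc0 := two_mul_le_neg_sum_abs_c0 c0 c1 c01 d hmin
  have hc1 := two_mul_le_neg_sum_abs_c1 c0 c1 c01 d hmin
  have hc01 := four_mul_le_neg_sum_abs_c01 c0 c1 c01 d hmin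
  have hd := le_sum_abs_sub_sum_abs_d c0 c1 c01 d hmin
  have hd_nonneg : 0 ≤ ∑ v, |d v| := by positivity
  linarith

/-- with `C = ln(1+√2)/π`, `(3C+4)/C < 17.26`; consequently the minimum
value `H*` of the Ising Hamiltonian on the Chimera graph satisfies
`H* ≤ -(1/17.26) · (Σ_{(u,v)∈E} |c_uv| + Σ_{u∈V} |d_u|)`. -/
theorem stmt10 (r : ℕ) (hr : 1 ≤ r)
    (c0 : Fin (r - 1) → Fin r → Fin 4 → ℝ)
    (c1 : Fin r → Fin (r - 1) → Fin 4 → ℝ)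
    (c01 : Fin r → Fin r → Fin 4 → Fin 4 → ℝ)
    (d : ChimeraVertex r → ℝ)
    (Sopt : ChimeraVertex r → ℝ) (hSopt : IsPM Sopt)
    (hmin : ∀ S : ChimeraVertex r → ℝ, IsPM S →
      IsingH c0 c1 c01 d Sopt ≤ IsingH c0 c1 c01 d S) :
    (3 * (Real.log (1 + Real.sqrt 2) / Real.pi) + 4) /
        (Real.log (1 + Real.sqrt 2) / Real.pi) < 17.26
    ∧ IsingH c0 c1 c01 d Sopt ≤
        -(1 / 17.26) *
          ((∑ i, ∑ j, ∑ k, |c0 i j k|) + (∑ i, ∑ j, ∑ k, |c1 i j k|)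
            + (∑ i, ∑ j, ∑ k0, ∑ k1, |c01 i j k0 k1|) + (∑ v, |d v|)) :=
  stmt10_general r c0 c1 c01 d Sopt hmin
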